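/- Let y, M ≥ 0 with max{y, M} > 0, and set z = max{y, M}. Then the infimum over x ∈ ℝ of max{ x², y² + (M − x)² } equals ( (y² + z²) / (2z) )². In particular, if y > M the infimum equals y², and if y ≤ M the infimum equals ( (y² + M²) / (2M) )², attained at x = (y² + M²)/(2M). -/

import Mathlib

/-!
The two branches `x ↦ x²` and `x ↦ y² + (M - x)²` are the squared distances from `(x, 0)` to
the origin and to `(M, y)`. The second is at least `y²`, with equality at `x = M`; when `y > M`
the first branch is below `y²` there, so the infimum is `y²`. When `y ≤ M` the branches cross at
the point `x₀ = (y² + M²)/(2M) ∈ [0, M]`, and moving away from `x₀` in either direction increases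
one of them, so the infimum is `x₀²`. For `z = y` the common formula reduces to `y²`.
-/

theorem csInf_setOf_exists_eq {α β : Type*} [ConditionallyCompleteLattice β] {f : α → β}
    {a : α} {b : β} (ha : f a = b) (hle : ∀ x, b ≤ f x) : sInf {d | ∃ x, d = f x} = b :=
  IsLeast.csInf_eq ⟨⟨a, ha.symm⟩, by rintro _ ⟨x, rfl⟩; exact hle x⟩

/-- The point `(x, 0)` equidistant from the origin and from `(M, y)`. -/
noncomputable def equidistantPoint (y M : ℝ) : ℝ := (y ^ 2 + M ^ 2) / (2 * M)

section

variable {y M : ℝ}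

theorem equidistantPoint_self (hy : y ≠ 0) : equidistantPoint y y = y := by
  unfold equidistantPoint
  field_simp
  ring

theorem equidistantPoint_nonneg (hM : 0 ≤ M) : 0 ≤ equidistantPoint y M := by
  unfold equidistantPoint
  positivity

theorem equidistantPoint_le (hy : 0 ≤ y) (hyM : y ≤ M) (hM : 0 < M) :
    equidistantPoint y M ≤ M := by
  rw [equidistantPoint, div_le_iff₀ (by positivity)]
  nlinarith

theorem sq_add_sub_equidistantPoint_sq (hM : M ≠ 0) :
    y ^ 2 + (M - equidistantPoint y M) ^ 2 = equidistantPoint y M ^ 2 := by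
  unfold equidistantPoint
  field_simp
  ring

theorem max_sq_equidistantPoint (hM : M ≠ 0) :
    max (equidistantPoint y M ^ 2) (y ^ 2 + (M - equidistantPoint y M) ^ 2) =
      equidistantPoint y M ^ 2 := by
  rw [sq_add_sub_equidistantPoint_sq hM, max_self]

theorem equidistantPoint_sq_le_max (hy : 0 ≤ y) (hyM : y ≤ M) (hM : 0 < M) (x : ℝ) :
    equidistantPoint y M ^ 2 ≤ max (x ^ 2) (y ^ 2 + (M - x) ^ 2) := by
  set p := equidistantPoint y M
  rcases le_total p x with hpx | hxp
  · exact le_max_of_le_left (pow_le_pow_left₀ (equidistantPoint_nonneg hM.le) hpx 2)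
  · have hMp : 0 ≤ M - p := sub_nonneg.2 (equidistantPoint_le hy hyM hM)
    calc p ^ 2 = y ^ 2 + (M - p) ^ 2 := (sq_add_sub_equidistantPoint_sq hM.ne').symm
      _ ≤ y ^ 2 + (M - x) ^ 2 := by gcongr
      _ ≤ _ := le_max_right _ _

theorem sInf_max_sq_of_le (hy : 0 ≤ y) (hyM : y ≤ M) (hM : 0 < M) :
    sInf {d : ℝ | ∃ x : ℝ, d = max (x ^ 2) (y ^ 2 + (M - x) ^ 2)} =
      equidistantPoint y M ^ 2 :=
  csInf_setOf_exists_eq (max_sq_equidistantPoint hM.ne') (equidistantPoint_sq_le_max hy hyM hM)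

theorem sInf_max_sq_of_lt (hM : 0 ≤ M) (hMy : M < y) :
    sInf {d : ℝ | ∃ x : ℝ, d = max (x ^ 2) (y ^ 2 + (M - x) ^ 2)} = y ^ 2 := by
  refine csInf_setOf_exists_eq (a := M) ?_ fun x ↦ le_max_of_le_right ?_
  · rw [sub_self, zero_pow two_ne_zero, add_zero, max_eq_right (pow_le_pow_left₀ hM hMy.le 2)]
  · nlinarith [sq_nonneg (M - x)]

end

theorem inf_max_sq (y M : ℝ) (hy : 0 ≤ y) (hM : 0 ≤ M) (hpos : 0 < max y M) :
    (sInf { d : ℝ | ∃ x : ℝ, d = max (x ^ 2) (y ^ 2 + (M - x) ^ 2) }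
      = ((y ^ 2 + (max y M) ^ 2) / (2 * max y M)) ^ 2) ∧
    (M < y → sInf { d : ℝ | ∃ x : ℝ, d = max (x ^ 2) (y ^ 2 + (M - x) ^ 2) } = y ^ 2) ∧
    (y ≤ M →
      sInf { d : ℝ | ∃ x : ℝ, d = max (x ^ 2) (y ^ 2 + (M - x) ^ 2) }
        = ((y ^ 2 + M ^ 2) / (2 * M)) ^ 2 ∧
      max (((y ^ 2 + M ^ 2) / (2 * M)) ^ 2)
          (y ^ 2 + (M - (y ^ 2 + M ^ 2) / (2 * M)) ^ 2)
        = ((y ^ 2 + M ^ 2) / (2 * M)) ^ 2) := by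
  change _ = equidistantPoint y (max y M) ^ 2 ∧ _ ∧
    (y ≤ M → _ = equidistantPoint y M ^ 2 ∧
      max (equidistantPoint y M ^ 2) (y ^ 2 + (M - equidistantPoint y M) ^ 2) = _)
  rcases le_or_gt y M with hyM | hMy
  · have hM0 : 0 < M := by rwa [max_eq_right hyM] at hpos
    have hInf := sInf_max_sq_of_le hy hyM hM0
    exact ⟨by rw [hInf, max_eq_right hyM], fun h ↦ absurd hyM h.not_ge,
      fun _ ↦ ⟨hInf, max_sq_equidistantPoint hM0.ne'⟩⟩
  · have hInf := sInf_max_sq_of_lt hM hMy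
    refine ⟨?_, fun _ ↦ hInf, fun h ↦ absurd hMy h.not_gt⟩
    rw [hInf, max_eq_left hMy.le, equidistantPoint_self (hM.trans_lt hMy).ne']
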